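/- arXiv:1805.08898 — 4 statements merged into one kernel-verified Lean document; each statement's English description precedes it below -/
import Mathlib

section
/- Let E be a real vector space, S ⊆ E a convex set, and let f, g : E → ℝ be affine functions (each of the form a real-linear map plus a real constant) such that f(x) ≥ 0 and g(x) ≥ 0 for every x ∈ S. Then the product function x ↦ f(x)·g(x) is quasiconcave on S, i.e., for every b ∈ ℝ the superlevel set {x ∈ S : f(x)·g(x) ≥ b} is convex. -/
/-!
Along a segment `z = a • x + c • y` both affine factors interpolate linearly, so
`f z * g z = a² f x g x + c² f y g y + a c (f x g y + f y g x)`. On the superlevel set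
`{b ≤ f * g}` with `b > 0`, AM-GM gives `(f x g y + f y g x)² ≥ 4 (f x g x) (f y g y) ≥ 4 b²`,
so the cross term is at least `2 b` and the whole sum is at least `b (a + c)² = b`.
-/

section Ordered

variable {𝕜 : Type*} [Field 𝕜] [LinearOrder 𝕜] [IsStrictOrderedRing 𝕜]

theorem two_mul_le_add_mul_of_le_mul {b p q r s : 𝕜} (hp : 0 ≤ p) (hq : 0 ≤ q) (hr : 0 ≤ r)
    (hs : 0 ≤ s) (hpq : b ≤ p * q) (hrs : b ≤ r * s) : 2 * b ≤ p * s + r * q := by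
  rcases le_or_gt b 0 with hb | hb
  · nlinarith [mul_nonneg hp hs, mul_nonneg hr hq]
  · have hsq : (2 * b) ^ 2 ≤ (p * s + r * q) ^ 2 := by
      nlinarith [sq_nonneg (p * s - r * q), mul_le_mul hpq hrs hb.le (hb.le.trans hpq)]
    exact (pow_le_pow_iff_left₀ (by positivity) (by positivity) two_ne_zero).1 hsq

theorem le_combo_mul_combo {b p q r s a c : 𝕜} (hp : 0 ≤ p) (hq : 0 ≤ q) (hr : 0 ≤ r)
    (hs : 0 ≤ s) (ha : 0 ≤ a) (hc : 0 ≤ c) (hac : a + c = 1) (hpq : b ≤ p * q)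
    (hrs : b ≤ r * s) : b ≤ (a * p + c * r) * (a * q + c * s) := by
  have hcross := two_mul_le_add_mul_of_le_mul hp hq hr hs hpq hrs
  calc b = a ^ 2 * b + c ^ 2 * b + a * c * (2 * b) := by
        linear_combination (-b * (a + c + 1)) * hac
    _ ≤ a ^ 2 * (p * q) + c ^ 2 * (r * s) + a * c * (p * s + r * q) := by gcongr
    _ = (a * p + c * r) * (a * q + c * s) := by ring

variable {E : Type*} [AddCommGroup E] [Module 𝕜 E]

theorem AffineMap.quasiconcaveOn_mul {S : Set E} (hS : Convex 𝕜 S) (f g : E →ᵃ[𝕜] 𝕜)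
    (hf : ∀ x ∈ S, 0 ≤ f x) (hg : ∀ x ∈ S, 0 ≤ g x) :
    QuasiconcaveOn 𝕜 S (fun x ↦ f x * g x) := by
  rintro b x ⟨hxS, hx⟩ y ⟨hyS, hy⟩ a c ha hc hac
  refine ⟨hS hxS hyS ha hc hac, ?_⟩
  simp only [Convex.combo_affine_apply hac, smul_eq_mul]
  exact le_combo_mul_combo (hf x hxS) (hg x hxS) (hf y hyS) (hg y hyS) ha hc hac hx hy

end Ordered

/-- The product of two nonnegative affine functions is quasiconcave on a convex set:
every superlevel set is convex. -/
theorem stmt_0 {E : Type*} [AddCommGroup E] [Module ℝ E]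
    (S : Set E) (hS : Convex ℝ S)
    (f g : E → ℝ) (Lf Lg : E →ₗ[ℝ] ℝ) (cf cg : ℝ)
    (hfa : ∀ x, f x = Lf x + cf) (hga : ∀ x, g x = Lg x + cg)
    (hf0 : ∀ x ∈ S, 0 ≤ f x) (hg0 : ∀ x ∈ S, 0 ≤ g x) :
    ∀ b : ℝ, Convex ℝ {x | x ∈ S ∧ b ≤ f x * g x} := by
  have hf : f = ⇑(Lf.toAffineMap + AffineMap.const ℝ E cf) := funext fun x ↦ by simp [hfa]
  have hg : g = ⇑(Lg.toAffineMap + AffineMap.const ℝ E cg) := funext fun x ↦ by simp [hga]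
  subst hf hg
  exact AffineMap.quasiconcaveOn_mul hS _ _ hf0 hg0
end

section
/- Fix positive integers N, K, an index k ∈ {1,…,K}, a channel vector h_k ∈ ℂ^N, a constant σ_{a,k}² > 0, and a target value P̂ ≥ 0. Then the set {(ρ, F) ∈ ℝ × (ℂ^{N×N})^K : 0 ≤ ρ ≤ 1, every F_j is positive semidefinite, and (1 − ρ)·(Σ_{j=1}^K Re(h_k^H F_j h_k) + σ_{a,k}²) ≥ P̂} is a convex subset of the real vector space ℝ × (ℂ^{N×N})^K. -/
/-!
The constraint set is cut out, inside `[0, 1] × (PSD cone)ᴷ`, by the condition that the image of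
`(ρ, F)` under the affine map `(ρ, F) ↦ (1 - ρ, ∑ⱼ Re(hᴴ Fⱼ h) + σ²)` lies in the hyperbolic region
`{(x, y) | x, y ≥ 0, c ≤ x y}`. That region is convex: expanding `(a x₁ + b x₂)(a y₁ + b y₂)`,
the cross term `x₁ y₂ + x₂ y₁` is at least `2 √(x₁ y₁ x₂ y₂) ≥ 2c` by AM-GM.
-/

open Matrix ComplexOrder

theorem Matrix.convex_setOf_posSemidef {n 𝕜 : Type*} [Fintype n] [RCLike 𝕜] :
    Convex ℝ {A : Matrix n n 𝕜 | A.PosSemidef} :=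
  fun _ hA _ hB _ _ ha hb _ => (hA.smul ha).add (hB.smul hb)

theorem two_mul_le_mul_add_mul {c x₁ y₁ x₂ y₂ : ℝ} (hx₁ : 0 ≤ x₁) (hy₁ : 0 ≤ y₁)
    (hx₂ : 0 ≤ x₂) (hy₂ : 0 ≤ y₂) (h₁ : c ≤ x₁ * y₁) (h₂ : c ≤ x₂ * y₂) :
    2 * c ≤ x₁ * y₂ + x₂ * y₁ := by
  rcases le_or_gt c 0 with hc | hc
  · nlinarith [mul_nonneg hx₁ hy₂, mul_nonneg hx₂ hy₁]
  · -- `(x₁y₂ + x₂y₁)² = (x₁y₂ - x₂y₁)² + 4 (x₁y₁)(x₂y₂)`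
    have hsq : (2 * c) ^ 2 ≤ (x₁ * y₂ + x₂ * y₁) ^ 2 := by
      nlinarith [sq_nonneg (x₁ * y₂ - x₂ * y₁), mul_le_mul h₁ h₂ hc.le (hc.le.trans h₁)]
    exact le_of_sq_le_sq hsq (by positivity)

theorem convex_setOf_le_mul (c : ℝ) :
    Convex ℝ {p : ℝ × ℝ | 0 ≤ p.1 ∧ 0 ≤ p.2 ∧ c ≤ p.1 * p.2} := by
  rintro ⟨x₁, y₁⟩ ⟨hx₁, hy₁, h₁⟩ ⟨x₂, y₂⟩ ⟨hx₂, hy₂, h₂⟩ a b ha hb hab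
  simp only [Set.mem_ofPred_eq, Prod.smul_mk, Prod.mk_add_mk, smul_eq_mul]
  refine ⟨add_nonneg (mul_nonneg ha hx₁) (mul_nonneg hb hx₂),
    add_nonneg (mul_nonneg ha hy₁) (mul_nonneg hb hy₂), ?_⟩
  have hcross := two_mul_le_mul_add_mul hx₁ hy₁ hx₂ hy₂ h₁ h₂
  calc c = (a + b) ^ 2 * c := by rw [hab, one_pow, one_mul]
    _ = a ^ 2 * c + b ^ 2 * c + a * b * (2 * c) := by ring
    _ ≤ a ^ 2 * (x₁ * y₁) + b ^ 2 * (x₂ * y₂) + a * b * (x₁ * y₂ + x₂ * y₁) := by gcongr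
    _ = (a * x₁ + b * x₂) * (a * y₁ + b * y₂) := by ring

noncomputable def Matrix.sumQuadFormRe {ι n : Type*} [Fintype ι] [Fintype n] (h : n → ℂ) :
    (ι → Matrix n n ℂ) →ₗ[ℝ] ℝ where
  toFun F := ∑ j, (star h ⬝ᵥ (F j *ᵥ h)).re
  map_add' F G := by simp [add_mulVec, Finset.sum_add_distrib]
  map_smul' r F := by simp [smul_mulVec, Finset.mul_sum]

theorem Matrix.sumQuadFormRe_nonneg {ι n : Type*} [Fintype ι] [Fintype n] (h : n → ℂ)
    {F : ι → Matrix n n ℂ} (hF : ∀ j, (F j).PosSemidef) : 0 ≤ sumQuadFormRe h F :=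
  Finset.sum_nonneg fun j _ => (Complex.nonneg_iff.1 ((hF j).dotProduct_mulVec_nonneg h)).1

theorem stmt_2_general (N K : ℕ)
    (h : Fin N → ℂ) (σa2 : ℝ) (hσ : 0 < σa2) (Phat : ℝ) :
    Convex ℝ {p : ℝ × (Fin K → Matrix (Fin N) (Fin N) ℂ) |
        (0 ≤ p.1 ∧ p.1 ≤ 1) ∧ (∀ j, (p.2 j).PosSemidef) ∧
        Phat ≤ (1 - p.1) * ((∑ j, (star h ⬝ᵥ (p.2 j *ᵥ h)).re) + σa2)} := by
  rintro ⟨ρ₁, F₁⟩ ⟨hρ₁, hF₁, hP₁⟩ ⟨ρ₂, F₂⟩ ⟨hρ₂, hF₂, hP₂⟩ a b ha hb hab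
  refine ⟨convex_Icc 0 1 hρ₁ hρ₂ ha hb hab,
    fun j => convex_setOf_posSemidef (hF₁ j) (hF₂ j) ha hb hab, ?_⟩
  have hmem : ∀ {ρ : ℝ} {F : Fin K → Matrix (Fin N) (Fin N) ℂ}, ρ ≤ 1 → (∀ j, (F j).PosSemidef) →
      Phat ≤ (1 - ρ) * (sumQuadFormRe h F + σa2) →
      (1 - ρ, sumQuadFormRe h F + σa2) ∈ {p : ℝ × ℝ | 0 ≤ p.1 ∧ 0 ≤ p.2 ∧ Phat ≤ p.1 * p.2} :=
    fun hρ hF hP => ⟨sub_nonneg.2 hρ, by linarith [sumQuadFormRe_nonneg h hF], hP⟩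
  have hcomb := (convex_setOf_le_mul Phat (hmem hρ₁.2 hF₁ hP₁) (hmem hρ₂.2 hF₂ hP₂) ha hb hab).2.2
  convert hcomb using 2
  · simp only [Prod.smul_mk, Prod.mk_add_mk, smul_eq_mul]
    linear_combination -hab
  · change sumQuadFormRe h (a • F₁ + b • F₂) + σa2 = _
    simp only [map_add, map_smul, Prod.smul_mk, Prod.mk_add_mk, smul_eq_mul]
    linear_combination -σa2 * hab

/-- Convexity of the energy-harvesting constraint set (C10) of problem OP4:
`{(ρ,F) : 0 ≤ ρ ≤ 1, Fⱼ ⪰ 0, (1-ρ)(∑ⱼ Re(hᵏᴴ Fⱼ hᵏ) + σ²) ≥ P̂}` is convex. -/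
theorem stmt_2 (N K : ℕ) (hN : 0 < N) (hK : 0 < K) (k : Fin K)
    (h : Fin N → ℂ) (σa2 : ℝ) (hσ : 0 < σa2) (Phat : ℝ) (hPhat : 0 ≤ Phat) :
    Convex ℝ {p : ℝ × (Fin K → Matrix (Fin N) (Fin N) ℂ) |
        (0 ≤ p.1 ∧ p.1 ≤ 1) ∧ (∀ j, (p.2 j).PosSemidef) ∧
        Phat ≤ (1 - p.1) * ((∑ j, (star h ⬝ᵥ (p.2 j *ᵥ h)).re) + σa2)} :=
  stmt_2_general N K h σa2 hσ Phat
end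

section
/- Fix positive integers N, K, channel vectors h_k ∈ ℂ^N, constants σ_{a,k}² > 0, σ_{d,k}² > 0, SINR thresholds γ̄_k > 0, and a power budget P_T > 0 (k ∈ {1,…,K}). Let f^I_1,…,f^I_K ∈ ℂ^N satisfy the pure-ID SINR constraints |h_k^H f^I_k|² ≥ γ̄_k·(Σ_{j≠k} |h_k^H f^I_j|² + σ_{a,k}² + σ_{d,k}²) for all k, and suppose S := Σ_{k=1}^K ‖f^I_k‖² satisfies 0 < S ≤ P_T. Define f_k := √(P_T/S)·f^I_k and ρ_k := S/P_T for each k, and P_I := min_{1≤k≤K} (1 − S/P_T)·(Σ_{j=1}^K |h_k^H f^I_j|² + σ_{a,k}²). Then: (i) Σ_{k=1}^K ‖f_k‖² = P_T; (ii) 0 < ρ_k ≤ 1 for all k; (iii) for all k, ρ_k·|h_k^H f_k|² ≥ γ̄_k·(ρ_k·Σ_{j≠k} |h_k^H f_j|² + ρ_k·σ_{a,k}² + σ_{d,k}²); and (iv) for all k, (1 − ρ_k)·(Σ_{j=1}^K |h_k^H f_j|² + σ_{a,k}²) ≥ P_I. -/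
open Matrix

lemma sq_norm_ofReal_sqrt_mul {c : ℝ} (hc : 0 ≤ c) (z : ℂ) :
    ‖(√c : ℂ) * z‖ ^ 2 = c * ‖z‖ ^ 2 := by
  rw [norm_mul, mul_pow, Complex.norm_real, Real.norm_of_nonneg (Real.sqrt_nonneg c),
    Real.sq_sqrt hc]

lemma sq_norm_dotProduct_ofReal_sqrt_mul {n : Type*} [Fintype n] {c : ℝ} (hc : 0 ≤ c)
    (u v : n → ℂ) :
    ‖u ⬝ᵥ (fun i => (√c : ℂ) * v i)‖ ^ 2 = c * ‖u ⬝ᵥ v‖ ^ 2 := by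
  change ‖u ⬝ᵥ ((√c : ℂ) • v)‖ ^ 2 = _
  rw [dotProduct_smul, smul_eq_mul, sq_norm_ofReal_sqrt_mul hc]

/-- Scaling all received powers by `c = 1/ρ` and decoding a `ρ` fraction restores signal and
interference exactly, while the antenna noise only shrinks to `ρ σa` and `σd` is unchanged. -/
lemma sinr_le_of_mul_eq_one {γ A B σa σd ρ c : ℝ} (hγ : 0 ≤ γ) (hσa : 0 ≤ σa) (hρ : ρ ≤ 1)
    (hρc : ρ * c = 1) (hB : γ * (A + σa + σd) ≤ B) :
    γ * (ρ * (c * A) + ρ * σa + σd) ≤ ρ * (c * B) := by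
  rw [← mul_assoc, ← mul_assoc, hρc, one_mul, one_mul]
  refine le_trans (mul_le_mul_of_nonneg_left ?_ hγ) hB
  linarith [mul_le_of_le_one_left hσa hρ]

theorem stmt_10_general (N K : ℕ) (hK : 1 ≤ K)
    (h : Fin K → Fin N → ℂ) (σa2 σd2 γ : Fin K → ℝ) (PT : ℝ)
    (hσa : ∀ k, 0 < σa2 k) (hγ : ∀ k, 0 < γ k) (hPT : 0 < PT)
    (fI : Fin K → Fin N → ℂ)
    (hSINR : ∀ k,
      γ k * ((∑ j ∈ Finset.univ.erase k, ‖star (h k) ⬝ᵥ fI j‖ ^ 2)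
          + σa2 k + σd2 k)
        ≤ ‖star (h k) ⬝ᵥ fI k‖ ^ 2)
    (S : ℝ) (hSdefS : S = ∑ k, ∑ i, ‖fI k i‖ ^ 2)
    (hS0 : 0 < S) (hSP : S ≤ PT)
    (f : Fin K → Fin N → ℂ)
    (hf : ∀ k, f k = fun i => (Real.sqrt (PT / S) : ℂ) * fI k i)
    (ρ : Fin K → ℝ) (hρ : ∀ k, ρ k = S / PT)
    (PI : ℝ)
    (hPI : PI = Finset.univ.inf' ⟨⟨0, hK⟩, Finset.mem_univ _⟩
      (fun k => (1 - S / PT) * ((∑ j, ‖star (h k) ⬝ᵥ fI j‖ ^ 2) + σa2 k))) :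
    (∑ k, ∑ i, ‖f k i‖ ^ 2) = PT ∧
    (∀ k, 0 < ρ k ∧ ρ k ≤ 1) ∧
    (∀ k, γ k * (ρ k * (∑ j ∈ Finset.univ.erase k, ‖star (h k) ⬝ᵥ f j‖ ^ 2)
        + ρ k * σa2 k + σd2 k) ≤ ρ k * ‖star (h k) ⬝ᵥ f k‖ ^ 2) ∧
    (∀ k, PI ≤ (1 - ρ k) * ((∑ j, ‖star (h k) ⬝ᵥ f j‖ ^ 2) + σa2 k)) := by
  set c : ℝ := PT / S
  have hc : 1 ≤ c := (one_le_div hS0).2 hSP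
  have hρc : S / PT * c = 1 := by rw [div_mul_div_comm, mul_comm, div_self (by positivity)]
  have hρ1 : S / PT ≤ 1 := (div_le_one hPT).2 hSP
  have hgain : ∀ k j, ‖star (h k) ⬝ᵥ f j‖ ^ 2 = c * ‖star (h k) ⬝ᵥ fI j‖ ^ 2 := fun k j => by
    rw [hf j, sq_norm_dotProduct_ofReal_sqrt_mul (by positivity)]
  have hgainSum : ∀ k (s : Finset (Fin K)),
      ∑ j ∈ s, ‖star (h k) ⬝ᵥ f j‖ ^ 2 = c * ∑ j ∈ s, ‖star (h k) ⬝ᵥ fI j‖ ^ 2 :=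
    fun k s => by simp only [hgain, Finset.mul_sum]
  simp only [hρ]
  refine ⟨?_, fun _ => ⟨div_pos hS0 hPT, hρ1⟩, fun k => ?_, fun k => ?_⟩
  · simp only [hf, sq_norm_ofReal_sqrt_mul (by positivity : 0 ≤ c), ← Finset.mul_sum, ← hSdefS]
    exact div_mul_cancel₀ PT hS0.ne'
  · rw [hgainSum, hgain]
    exact sinr_le_of_mul_eq_one (hγ k).le (hσa k).le hρ1 hρc (hSINR k)
  · rw [hPI, hgainSum]
    refine (Finset.inf'_le _ (Finset.mem_univ k)).trans ?_
    have hsum : 0 ≤ ∑ j, ‖star (h k) ⬝ᵥ fI j‖ ^ 2 := by positivity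
    gcongr
    exact le_mul_of_one_le_left hsum hc

/-- Lower-bound construction of Section VI-A2: scaling SINR-feasible pure-ID
precoders `fᴵₖ` to the full budget `P_T` and splitting a `S/P_T` fraction of
received power for decoding gives a feasible point of OP with minimum received
RF power for EH at least `P_I`. -/
theorem stmt_10 (N K : ℕ) (hN : 0 < N) (hK : 1 ≤ K)
    (h : Fin K → Fin N → ℂ) (σa2 σd2 γ : Fin K → ℝ) (PT : ℝ)
    (hσa : ∀ k, 0 < σa2 k) (hσd : ∀ k, 0 < σd2 k) (hγ : ∀ k, 0 < γ k) (hPT : 0 < PT)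
    (fI : Fin K → Fin N → ℂ)
    (hSINR : ∀ k,
      γ k * ((∑ j ∈ Finset.univ.erase k, ‖star (h k) ⬝ᵥ fI j‖ ^ 2)
          + σa2 k + σd2 k)
        ≤ ‖star (h k) ⬝ᵥ fI k‖ ^ 2)
    (S : ℝ) (hSdefS : S = ∑ k, ∑ i, ‖fI k i‖ ^ 2)
    (hS0 : 0 < S) (hSP : S ≤ PT)
    (f : Fin K → Fin N → ℂ)
    (hf : ∀ k, f k = fun i => (Real.sqrt (PT / S) : ℂ) * fI k i)
    (ρ : Fin K → ℝ) (hρ : ∀ k, ρ k = S / PT)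
    (PI : ℝ)
    (hPI : PI = Finset.univ.inf' ⟨⟨0, hK⟩, Finset.mem_univ _⟩
      (fun k => (1 - S / PT) * ((∑ j, ‖star (h k) ⬝ᵥ fI j‖ ^ 2) + σa2 k))) :
    (∑ k, ∑ i, ‖f k i‖ ^ 2) = PT ∧
    (∀ k, 0 < ρ k ∧ ρ k ≤ 1) ∧
    (∀ k, γ k * (ρ k * (∑ j ∈ Finset.univ.erase k, ‖star (h k) ⬝ᵥ f j‖ ^ 2)
        + ρ k * σa2 k + σd2 k) ≤ ρ k * ‖star (h k) ⬝ᵥ f k‖ ^ 2) ∧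
    (∀ k, PI ≤ (1 - ρ k) * ((∑ j, ‖star (h k) ⬝ᵥ f j‖ ^ 2) + σa2 k)) :=
  stmt_10_general N K hK h σa2 σd2 γ PT hσa hγ hPT fI hSINR S hSdefS hS0 hSP f hf ρ hρ PI hPI
end

section
/- Fix a positive integer K, nonnegative reals G_{kj} for k,j ∈ {1,…,K} (effective channel gains), constants σ_{a,k}² > 0, σ_{d,k}² > 0, SINR thresholds γ̄_k > 0, a power budget P_T > 0, powers p_1,…,p_K ≥ 0 with 0 < Σ_{j=1}^K p_j ≤ P_T, and power-splitting ratios ρ_k ∈ (0,1). Suppose that for all k: p_k·G_{kk}/γ̄_k − Σ_{j≠k} p_j·G_{kj} ≥ σ_{a,k}² + σ_{d,k}²/ρ_k. Let t := P_T/(Σ_{j=1}^K p_j) ≥ 1. Then the scaled powers t·p_1,…,t·p_K satisfy Σ_{j=1}^K t·p_j = P_T, satisfy the same SINR constraints for all k, and satisfy (1 − ρ_k)·(Σ_{j=1}^K t·p_j·G_{kj} + σ_{a,k}²) ≥ (1 − ρ_k)·(Σ_{j=1}^K p_j·G_{kj} + σ_{a,k}²) for all k. -/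
/-!
The SINR margin `p k * G k k / γ k - ∑_{j ≠ k} p j * G k j` is linear in `p`, so scaling by
`t ≥ 1` multiplies it by `t`; since it already dominates a nonnegative noise term, it still does.
The received RF powers are nonnegative combinations of the `p j`, hence do not decrease.
-/

open Finset

section Scaling

variable {ι : Type*}

lemma sinr_margin_const_mul (s : Finset ι) (c : ℝ) (G : ι → ι → ℝ) (p γ : ι → ℝ)
    (k : ι) :
    c * p k * G k k / γ k - ∑ j ∈ s, c * p j * G k j
      = c * (p k * G k k / γ k - ∑ j ∈ s, p j * G k j) := by
  rw [mul_sub, mul_sum]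
  congr 1
  · ring
  · exact sum_congr rfl fun j _ => mul_assoc _ _ _

lemma sum_mul_le_sum_const_mul_mul {s : Finset ι} {c : ℝ} {G : ι → ι → ℝ}
    {p : ι → ℝ} (hc : 1 ≤ c) (k : ι) (hpG : ∀ j ∈ s, 0 ≤ p j * G k j) :
    ∑ j ∈ s, p j * G k j ≤ ∑ j ∈ s, c * p j * G k j :=
  sum_le_sum fun j hj => by
    rw [mul_assoc]
    exact le_mul_of_one_le_left (hpG j hj) hc

end Scaling

lemma le_const_mul_of_le {a x c : ℝ} (ha : 0 ≤ a) (hax : a ≤ x) (hc : 1 ≤ c) :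
    a ≤ c * x :=
  hax.trans (le_mul_of_one_le_left (ha.trans hax) hc)

theorem stmt_12_general (K : ℕ)
    (G : Fin K → Fin K → ℝ) (hG : ∀ k j, 0 ≤ G k j)
    (σa2 σd2 γ : Fin K → ℝ)
    (hσa : ∀ k, 0 < σa2 k) (hσd : ∀ k, 0 < σd2 k)
    (PT : ℝ)
    (p : Fin K → ℝ) (hp : ∀ k, 0 ≤ p k)
    (hpsum0 : 0 < ∑ j, p j) (hpsum : (∑ j, p j) ≤ PT)
    (ρ : Fin K → ℝ) (hρ : ∀ k, ρ k ∈ Set.Ioo (0:ℝ) 1)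
    (hSINR : ∀ k, σa2 k + σd2 k / ρ k ≤
      p k * G k k / γ k - ∑ j ∈ Finset.univ.erase k, p j * G k j)
    (t : ℝ) (ht : t = PT / ∑ j, p j) :
    1 ≤ t ∧
    (∑ j, t * p j) = PT ∧
    (∀ k, σa2 k + σd2 k / ρ k ≤
      t * p k * G k k / γ k - ∑ j ∈ Finset.univ.erase k, t * p j * G k j) ∧
    (∀ k, (1 - ρ k) * ((∑ j, p j * G k j) + σa2 k)
        ≤ (1 - ρ k) * ((∑ j, t * p j * G k j) + σa2 k)) := by
  have ht1 : 1 ≤ t := ht ▸ (one_le_div hpsum0).2 hpsum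
  refine ⟨ht1, ?_, fun k => ?_, fun k => ?_⟩
  · rw [← mul_sum, ht, div_mul_cancel₀ _ hpsum0.ne']
  · have hnoise : 0 ≤ σa2 k + σd2 k / ρ k :=
      add_nonneg (hσa k).le (div_pos (hσd k) (hρ k).1).le
    rw [sinr_margin_const_mul]
    exact le_const_mul_of_le hnoise (hSINR k) ht1
  · have hrf := sum_mul_le_sum_const_mul_mul (s := univ) ht1 k fun j _ =>
      mul_nonneg (hp j) (hG k j)
    exact mul_le_mul_of_nonneg_left (add_le_add_left hrf _) (sub_nonneg.2 (hρ k).2.le)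

/-- Tightness of the total power constraint in OP5: scaling all powers by
`t = P_T / ∑ⱼ pⱼ ≥ 1` uses the full budget, preserves the SINR constraints and
does not decrease any received RF power for energy harvesting. -/
theorem stmt_12 (K : ℕ) (hK : 0 < K)
    (G : Fin K → Fin K → ℝ) (hG : ∀ k j, 0 ≤ G k j)
    (σa2 σd2 γ : Fin K → ℝ)
    (hσa : ∀ k, 0 < σa2 k) (hσd : ∀ k, 0 < σd2 k) (hγ : ∀ k, 0 < γ k)
    (PT : ℝ) (hPT : 0 < PT)
    (p : Fin K → ℝ) (hp : ∀ k, 0 ≤ p k)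
    (hpsum0 : 0 < ∑ j, p j) (hpsum : (∑ j, p j) ≤ PT)
    (ρ : Fin K → ℝ) (hρ : ∀ k, ρ k ∈ Set.Ioo (0:ℝ) 1)
    (hSINR : ∀ k, σa2 k + σd2 k / ρ k ≤
      p k * G k k / γ k - ∑ j ∈ Finset.univ.erase k, p j * G k j)
    (t : ℝ) (ht : t = PT / ∑ j, p j) :
    1 ≤ t ∧
    (∑ j, t * p j) = PT ∧
    (∀ k, σa2 k + σd2 k / ρ k ≤
      t * p k * G k k / γ k - ∑ j ∈ Finset.univ.erase k, t * p j * G k j) ∧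
    (∀ k, (1 - ρ k) * ((∑ j, p j * G k j) + σa2 k)
        ≤ (1 - ρ k) * ((∑ j, t * p j * G k j) + σa2 k)) :=
  stmt_12_general K G hG σa2 σd2 γ hσa hσd PT p hp hpsum0 hpsum ρ hρ hSINR t ht
end
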